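/- arXiv:2306.09790 — 3 statements merged into one kernel-verified Lean document; each statement's English description precedes it below -/
import Mathlib

section
/- Reduction preserves IB roots: if (p(y|x̂), p(x̂)) with all p(x̂) > 0 satisfies the IB fixed-point equations at β, and two indices x̂₁ ≠ x̂₂ have identical decoders p(·|x̂₁) = p(·|x̂₂), then the reduced tuple obtained by deleting x̂₂ and setting the new marginal of x̂₁ to p(x̂₁) + p(x̂₂) again satisfies the IB fixed-point equations at β, with the same values of I(X;X̂) and I(Y;X̂). -/
open scoped BigOperators
open Real

noncomputable section

namespace IB

variable {X Y Xh : Type} [Fintype X] [Fintype Y] [Fintype Xh]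

/-- Marginal `p(x̂) = ∑ₓ p(x̂|x) p(x)`. -/
def margXh (pX : X → ℝ) (q : X → Xh → ℝ) (xh : Xh) : ℝ :=
  ∑ x, q x xh * pX x

/-- Label marginal `p_Y(y) = ∑ₓ p(y|x) p(x)`. -/
def pYm (pX : X → ℝ) (pYgX : X → Y → ℝ) (y : Y) : ℝ :=
  ∑ x, pYgX x y * pX x

/-- Joint distribution of `(Y, X̂)`. -/
def jointYXh (pX : X → ℝ) (pYgX : X → Y → ℝ) (q : X → Xh → ℝ) (y : Y) (xh : Xh) : ℝ :=
  ∑ x, pYgX x y * q x xh * pX x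

/-- Mutual information `I(X; X̂)` of the encoder. -/
def IX (pX : X → ℝ) (q : X → Xh → ℝ) : ℝ :=
  ∑ x, ∑ xh, pX x * q x xh * Real.log (q x xh / margXh pX q xh)

/-- Mutual information `I(Y; X̂)` of the induced Markov chain `Y — X — X̂`. -/
def IY (pX : X → ℝ) (pYgX : X → Y → ℝ) (q : X → Xh → ℝ) : ℝ :=
  ∑ y, ∑ xh, jointYXh pX pYgX q y xh *
    Real.log (jointYXh pX pYgX q y xh / (pYm pX pYgX y * margXh pX q xh))

/-- `q` is a conditional probability distribution (an encoder). -/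
def IsEncoder (q : X → Xh → ℝ) : Prop :=
  (∀ x xh, 0 ≤ q x xh) ∧ ∀ x, ∑ xh, q x xh = 1

/-- Decoder `p(y|x̂) = ∑ₓ p(y|x) p(x|x̂)`. -/
def dec (pX : X → ℝ) (pYgX : X → Y → ℝ) (q : X → Xh → ℝ) (y : Y) (xh : Xh) : ℝ :=
  (∑ x, pYgX x y * q x xh * pX x) / margXh pX q xh

/-- KL divergence `D_KL[p(y|x) ‖ p(y|x̂)]`. -/
def dkl (pX : X → ℝ) (pYgX : X → Y → ℝ) (q : X → Xh → ℝ) (x : X) (xh : Xh) : ℝ :=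
  ∑ y, pYgX x y * Real.log (pYgX x y / dec pX pYgX q y xh)

/-- IB partition function `Z(x, β)`. -/
def Zf (pX : X → ℝ) (pYgX : X → Y → ℝ) (q : X → Xh → ℝ) (β : ℝ) (x : X) : ℝ :=
  ∑ xh, margXh pX q xh * Real.exp (-β * dkl pX pYgX q x xh)

/-- `q` satisfies the IB fixed-point equations at `β`. -/
def IBRoot (pX : X → ℝ) (pYgX : X → Y → ℝ) (β : ℝ) (q : X → Xh → ℝ) : Prop :=
  ∀ x xh, q x xh = margXh pX q xh / Zf pX pYgX q β x * Real.exp (-β * dkl pX pYgX q x xh)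

/-- Merge the duplicate cluster `xh₂` into `xh₁`: the new encoder on `Xh \ {xh₂}`
sends `x` to `xh₁` with probability `q x xh₁ + q x xh₂`, all else unchanged. -/
def mergeEnc [DecidableEq Xh] (q : X → Xh → ℝ) (xh₁ xh₂ : Xh) :
    X → {z : Xh // z ≠ xh₂} → ℝ :=
  fun x xh => if xh.1 = xh₁ then q x xh₁ + q x xh₂ else q x xh.1

/-- Summing a merged family over the subtype equals summing the original family. -/
lemma sum_merge [DecidableEq Xh] (xh₁ xh₂ : Xh) (hne : xh₁ ≠ xh₂) (f : Xh → ℝ) :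
    (∑ xh : {z : Xh // z ≠ xh₂}, if xh.1 = xh₁ then f xh₁ + f xh₂ else f xh.1)
      = ∑ z, f z := by
  classical
  rw [← Finset.sum_subtype (Finset.univ.erase xh₂)
      (by simp) (fun z => if z = xh₁ then f xh₁ + f xh₂ else f z)]
  have h₁ : xh₁ ∈ Finset.univ.erase xh₂ := Finset.mem_erase.mpr ⟨hne, Finset.mem_univ _⟩
  rw [← Finset.add_sum_erase _ _ h₁, ← Finset.add_sum_erase _ f (Finset.mem_univ xh₂),
      ← Finset.add_sum_erase _ f h₁]
  have : ∑ z ∈ (Finset.univ.erase xh₂).erase xh₁,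
      (if z = xh₁ then f xh₁ + f xh₂ else f z) = ∑ z ∈ (Finset.univ.erase xh₂).erase xh₁, f z :=
    Finset.sum_congr rfl fun z hz => if_neg (Finset.mem_erase.mp hz).1
  rw [if_pos rfl, this]
  ring

/-- Key algebraic identity for merging two clusters with proportional weights. -/
lemma merge_log (c m₁ m₂ t a : ℝ) (h₁ : 0 < m₁) (h₂ : 0 < m₂) :
    a * (c * m₁ + c * m₂) * Real.log ((c * m₁ + c * m₂) / (t * (m₁ + m₂)))
      = a * (c * m₁) * Real.log (c * m₁ / (t * m₁))
        + a * (c * m₂) * Real.log (c * m₂ / (t * m₂)) := by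
  have h12 : m₁ + m₂ ≠ 0 := by positivity
  have e1 : c * m₁ / (t * m₁) = c / t := mul_div_mul_right _ _ h₁.ne'
  have e2 : c * m₂ / (t * m₂) = c / t := mul_div_mul_right _ _ h₂.ne'
  have e12 : (c * m₁ + c * m₂) / (t * (m₁ + m₂)) = c / t := by
    rw [← mul_add]; exact mul_div_mul_right _ _ h12
  rw [e1, e2, e12]; ring

/-- reduction preserves IB roots — merging two clusters with identical
decoders yields again an IB root at `β`, with the same `I(X;X̂)` and `I(Y;X̂)`. -/
theorem merge_duplicate_clusters_preserves_root [DecidableEq Xh]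
    (pX : X → ℝ) (pYgX : X → Y → ℝ) (hpX : ∀ x, 0 < pX x)
    (β : ℝ) (hβ : 0 < β)
    (q : X → Xh → ℝ) (hq : IsEncoder q)
    (hm : ∀ xh, 0 < margXh pX q xh)
    (hroot : IBRoot pX pYgX β q)
    (xh₁ xh₂ : Xh) (hne : xh₁ ≠ xh₂)
    (hdup : ∀ y, dec pX pYgX q y xh₁ = dec pX pYgX q y xh₂) :
    IsEncoder (mergeEnc q xh₁ xh₂) ∧
    IBRoot pX pYgX β (mergeEnc q xh₁ xh₂) ∧
    IX pX (mergeEnc q xh₁ xh₂) = IX pX q ∧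
    IY pX pYgX (mergeEnc q xh₁ xh₂) = IY pX pYgX q := by
  classical
  -- abbreviations
  have hq1 : ∀ x (xh : {z : Xh // z ≠ xh₂}),
      mergeEnc q xh₁ xh₂ x xh = if xh.1 = xh₁ then q x xh₁ + q x xh₂ else q x xh.1 :=
    fun _ _ => rfl
  have hmarg : ∀ xh : {z : Xh // z ≠ xh₂},
      margXh pX (mergeEnc q xh₁ xh₂) xh
        = if xh.1 = xh₁ then margXh pX q xh₁ + margXh pX q xh₂ else margXh pX q xh.1 := by
    intro xh
    by_cases h : xh.1 = xh₁ <;>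
      simp [margXh, mergeEnc, h, add_mul, Finset.sum_add_distrib]
  have hjoint : ∀ y (xh : {z : Xh // z ≠ xh₂}),
      jointYXh pX pYgX (mergeEnc q xh₁ xh₂) y xh
        = if xh.1 = xh₁ then jointYXh pX pYgX q y xh₁ + jointYXh pX pYgX q y xh₂
          else jointYXh pX pYgX q y xh.1 := by
    intro y xh
    by_cases h : xh.1 = xh₁ <;>
      simp [jointYXh, mergeEnc, h, mul_add, add_mul, Finset.sum_add_distrib]
  -- joint as decoder times marginal
  have hJ1 : ∀ y, jointYXh pX pYgX q y xh₁ = dec pX pYgX q y xh₁ * margXh pX q xh₁ := by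
    intro y
    rw [dec, div_mul_cancel₀ _ (hm xh₁).ne']
    rfl
  have hJ2 : ∀ y, jointYXh pX pYgX q y xh₂ = dec pX pYgX q y xh₁ * margXh pX q xh₂ := by
    intro y
    rw [hdup y, dec, div_mul_cancel₀ _ (hm xh₂).ne']
    rfl
  have hm12 : margXh pX q xh₁ + margXh pX q xh₂ ≠ 0 := by
    have := hm xh₁; have := hm xh₂; positivity
  -- decoders are preserved
  have hdec' : ∀ y (xh : {z : Xh // z ≠ xh₂}),
      dec pX pYgX (mergeEnc q xh₁ xh₂) y xh = dec pX pYgX q y xh.1 := by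
    intro y xh
    show jointYXh pX pYgX (mergeEnc q xh₁ xh₂) y xh / margXh pX (mergeEnc q xh₁ xh₂) xh
        = dec pX pYgX q y xh.1
    rw [hjoint y xh, hmarg xh]
    by_cases h : xh.1 = xh₁
    · rw [if_pos h, if_pos h, hJ1 y, hJ2 y, ← mul_add, mul_div_assoc, div_self hm12,
        mul_one, h]
    · rw [if_neg h, if_neg h]; rfl
  -- KL divergences preserved, and the two merged KLs agree
  have hdkl' : ∀ x (xh : {z : Xh // z ≠ xh₂}),
      dkl pX pYgX (mergeEnc q xh₁ xh₂) x xh = dkl pX pYgX q x xh.1 := by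
    intro x xh
    unfold dkl
    exact Finset.sum_congr rfl fun y _ => by rw [hdec' y xh]
  have hdkl12 : ∀ x, dkl pX pYgX q x xh₁ = dkl pX pYgX q x xh₂ := by
    intro x
    unfold dkl
    exact Finset.sum_congr rfl fun y _ => by rw [hdup y]
  -- partition function preserved
  have hZ : ∀ x, Zf pX pYgX (mergeEnc q xh₁ xh₂) β x = Zf pX pYgX q β x := by
    intro x
    unfold Zf
    rw [← sum_merge xh₁ xh₂ hne
      (fun z => margXh pX q z * Real.exp (-β * dkl pX pYgX q x z))]
    refine Finset.sum_congr rfl fun xh _ => ?_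
    rw [hmarg xh, hdkl' x xh]
    by_cases h : xh.1 = xh₁
    · rw [if_pos h, if_pos h, h, hdkl12 x, add_mul]
    · rw [if_neg h, if_neg h]
  refine ⟨⟨?_, ?_⟩, ?_, ?_, ?_⟩
  · -- nonnegativity
    intro x xh
    rw [hq1 x xh]
    by_cases h : xh.1 = xh₁
    · rw [if_pos h]; exact add_nonneg (hq.1 x xh₁) (hq.1 x xh₂)
    · rw [if_neg h]; exact hq.1 x xh.1
  · -- normalization
    intro x
    have := sum_merge xh₁ xh₂ hne (q x)
    calc (∑ xh : {z : Xh // z ≠ xh₂}, mergeEnc q xh₁ xh₂ x xh)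
        = ∑ z, q x z := this
      _ = 1 := hq.2 x
  · -- IB root
    intro x xh
    rw [hmarg xh, hZ x, hdkl' x xh, hq1 x xh]
    by_cases h : xh.1 = xh₁
    · rw [if_pos h, if_pos h, h, hroot x xh₁, hroot x xh₂, hdkl12 x, add_div, add_mul]
    · rw [if_neg h, if_neg h]; exact hroot x xh.1
  · -- I(X;X̂) preserved
    unfold IX
    refine Finset.sum_congr rfl fun x _ => ?_
    set c : ℝ := Real.exp (-β * dkl pX pYgX q x xh₁) / Zf pX pYgX q β x with hc
    have hc1 : q x xh₁ = c * margXh pX q xh₁ := by rw [hroot x xh₁, hc]; ring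
    have hc2 : q x xh₂ = c * margXh pX q xh₂ := by
      rw [hroot x xh₂, hc, hdkl12 x]; ring
    rw [← sum_merge xh₁ xh₂ hne
      (fun z => pX x * q x z * Real.log (q x z / margXh pX q z))]
    refine Finset.sum_congr rfl fun xh _ => ?_
    rw [hq1 x xh, hmarg xh]
    by_cases h : xh.1 = xh₁
    · simp only [if_pos h]
      rw [hc1, hc2]
      have key := merge_log c (margXh pX q xh₁) (margXh pX q xh₂) 1 (pX x)
        (hm xh₁) (hm xh₂)
      simpa only [one_mul] using key
    · simp only [if_neg h]
  · -- I(Y;X̂) preserved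
    unfold IY
    refine Finset.sum_congr rfl fun y _ => ?_
    rw [← sum_merge xh₁ xh₂ hne
      (fun z => jointYXh pX pYgX q y z *
        Real.log (jointYXh pX pYgX q y z / (pYm pX pYgX y * margXh pX q z)))]
    refine Finset.sum_congr rfl fun xh _ => ?_
    rw [hjoint y xh, hmarg xh]
    by_cases h : xh.1 = xh₁
    · simp only [if_pos h]
      rw [hJ1 y, hJ2 y]
      have key := merge_log (dec pX pYgX q y xh₁) (margXh pX q xh₁) (margXh pX q xh₂)
        (pYm pX pYgX y) 1 (hm xh₁) (hm xh₂)
      simpa only [one_mul] using key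
    · simp only [if_neg h]

end IB
end
end

section
/- Mrs. Gerber's-Lemma-based optimality for the BSC: with Y ~ Bernoulli(1/2), X = Y ⊕ Z, Z ~ Bernoulli(α) independent of Y (0 < α < 1/2), the IB curve satisfies I_Y(I_X) = log 2 - h(α * h⁻¹(log 2 - I_X)) for I_X ∈ [0, log 2]: that is, for every Markov chain X̂—X—Y with I(X̂;X) ≤ I_X one has I(X̂;Y) ≤ log 2 - h(α * h⁻¹(log 2 - I_X)), and equality is attained by X̂ = X ⊕ V with V ~ Bernoulli(δ), δ = h⁻¹(log 2 - I_X). -/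
/-!
Write `a ⋆ b` for `bconv a b` and, for a uniform input, `s(x̂) = P(X = 1 | X̂ = x̂)`. Then
`I(X; X̂) = log 2 - 𝔼 h(s(X̂))` and, since `Y` given `X̂ = x̂` is Bernoulli(`α ⋆ s(x̂)`),
`I(Y; X̂) = log 2 - 𝔼 h(α ⋆ s(X̂))`. Mrs. Gerber's lemma says that `v ↦ h(α ⋆ h⁻¹(v))` is convex,
so Jensen turns `𝔼 h(s) ≥ h(δ)` into `𝔼 h(α ⋆ s) ≥ h(α ⋆ δ)`. Convexity is used only through a
supporting line at `h(δ)`, whose slope is `(1 - 2α) h'(α ⋆ δ) / h'(δ)`; that it supports the curve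
amounts to `t ↦ h'(α ⋆ t) / h'(t)` being nondecreasing on `(0, 1/2)`, which in turn follows from
the concavity of `t ↦ t (1 - t) h'(t)`. The binary symmetric encoder `X̂ = X ⊕ V` has a constant
posterior entropy `h(δ)`, so it attains the bound.
-/

open scoped BigOperators
open Real

noncomputable section

namespace IB

variable {X Y Xh : Type} [Fintype X] [Fintype Y] [Fintype Xh]

/-- Binary symmetric channel with crossover probability `α`: `p(y|x)`. -/
def bscChannel (α : ℝ) : Bool → Bool → ℝ := fun x y => if y = x then 1 - α else α

/-- Binary symmetric encoder with flip probability `δ`: `p(x̂|x)`. -/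
def bscEnc (δ : ℝ) : Bool → Bool → ℝ := fun x xh => if xh = x then 1 - δ else δ

/-- Binary entropy `h(p)` (natural log), with `h(0) = h(1) = 0`. -/
def binEnt (p : ℝ) : ℝ := -(p * Real.log p) - (1 - p) * Real.log (1 - p)

/-- Binary convolution `a * b := a(1-b) + b(1-a)`. -/
def bconv (a b : ℝ) : ℝ := a * (1 - b) + b * (1 - a)

open Set

lemma binEnt_eq_binEntropy : binEnt = binEntropy := by
  funext p
  simp only [binEnt, binEntropy, log_inv]
  ring

lemma bconv_comm (a b : ℝ) : bconv a b = bconv b a := by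
  unfold bconv; ring

lemma bconv_eq (a b : ℝ) : bconv a b = a + (1 - 2 * a) * b := by
  unfold bconv; ring

lemma bconv_one_sub (a b : ℝ) : bconv a (1 - b) = 1 - bconv a b := by
  unfold bconv; ring

lemma hasDerivAt_bconv (a b : ℝ) : HasDerivAt (bconv a) (1 - 2 * a) b := by
  have h : bconv a = fun t => a + (1 - 2 * a) * t := funext (bconv_eq a)
  simpa [h] using ((hasDerivAt_id b).const_mul (1 - 2 * a)).const_add a

lemma bconv_mem_Ioc {a t : ℝ} (ha : a ∈ Icc (0 : ℝ) (1 / 2)) (ht : t ∈ Ioo (0 : ℝ) (1 / 2)) :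
    bconv a t ∈ Ioc (0 : ℝ) (1 / 2) := by
  obtain ⟨ha0, ha1⟩ := ha
  obtain ⟨ht0, ht1⟩ := ht
  rw [bconv_eq]
  constructor <;> nlinarith

lemma binEntropy_le_binEntropy_bconv {a b : ℝ} (ha : a ∈ Icc (0 : ℝ) 1) (hb : b ∈ Icc (0 : ℝ) 1) :
    binEntropy a ≤ binEntropy (bconv a b) := by
  have hconc := strictConcave_binEntropy.concaveOn.2 ha (y := 1 - a)
    ⟨by linarith [ha.2], by linarith [ha.1]⟩
    (sub_nonneg.2 hb.2) hb.1 (sub_add_cancel 1 b)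
  simp only [smul_eq_mul, binEntropy_one_sub] at hconc
  rw [show bconv a b = (1 - b) * a + b * (1 - a) by unfold bconv; ring]
  linarith

def binEntropyDeriv (p : ℝ) : ℝ := log (1 - p) - log p

lemma binEntropyDeriv_pos {p : ℝ} (h0 : 0 < p) (h1 : p < 1 / 2) : 0 < binEntropyDeriv p :=
  sub_pos.2 (log_lt_log h0 (by linarith))

lemma binEntropyDeriv_nonneg {p : ℝ} (h0 : 0 < p) (h1 : p ≤ 1 / 2) : 0 ≤ binEntropyDeriv p :=
  sub_nonneg.2 (log_le_log h0 (by linarith))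

lemma hasDerivAt_binEntropyDeriv {p : ℝ} (h0 : 0 < p) (h1 : p < 1) :
    HasDerivAt binEntropyDeriv (-(p * (1 - p))⁻¹) p := by
  have hl1 := ((hasDerivAt_id p).const_sub 1).log (by simp; linarith)
  have hl2 := (hasDerivAt_id p).log h0.ne'
  refine (hl1.sub hl2).congr_deriv ?_
  simp only [id]
  field_simp [sub_ne_zero.2 h1.ne']
  ring

lemma concaveOn_mul_one_sub_mul_binEntropyDeriv :
    ConcaveOn ℝ (Ioc 0 (1 / 2)) fun t => t * (1 - t) * binEntropyDeriv t := by
  have hint : interior (Ioc (0 : ℝ) (1 / 2)) = Ioo 0 (1 / 2) := interior_Ioc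
  refine concaveOn_of_hasDerivWithinAt2_nonpos (convex_Ioc 0 (1 / 2))
    (f' := fun t => (1 - 2 * t) * binEntropyDeriv t - 1)
    (f'' := fun t => -2 * binEntropyDeriv t - (1 - 2 * t) * (t * (1 - t))⁻¹) ?_ ?_ ?_ ?_
  · intro t ht
    exact ((continuousAt_id.mul (continuousAt_const.sub continuousAt_id)).mul
      (hasDerivAt_binEntropyDeriv ht.1 (by linarith [ht.2])).continuousAt).continuousWithinAt
  · rw [hint]
    rintro t ⟨ht0, ht1⟩
    have hD := hasDerivAt_binEntropyDeriv ht0 (by linarith)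
    refine ((((hasDerivAt_id t).mul ((hasDerivAt_id t).const_sub 1)).mul hD).congr_deriv
      ?_).hasDerivWithinAt
    have : 1 - t ≠ 0 := by linarith
    simp only [id, Pi.mul_apply]
    field_simp
    ring
  · rw [hint]
    rintro t ⟨ht0, ht1⟩
    have hD := hasDerivAt_binEntropyDeriv ht0 (by linarith)
    refine (((((hasDerivAt_id t).const_mul 2).const_sub 1).mul hD).sub_const 1).congr_deriv
      ?_ |>.hasDerivWithinAt
    simp only [id]
    ring
  · rw [hint]
    rintro t ⟨ht0, ht1⟩
    have := binEntropyDeriv_pos ht0 ht1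
    have : 0 ≤ (1 - 2 * t) * (t * (1 - t))⁻¹ :=
      mul_nonneg (by linarith) (inv_nonneg.2 (by nlinarith))
    linarith

lemma one_sub_two_mul_mul_le_bconv {a t : ℝ} (ha : a ∈ Icc (0 : ℝ) (1 / 2))
    (ht : t ∈ Ioc (0 : ℝ) (1 / 2)) :
    (1 - 2 * a) * (t * (1 - t) * binEntropyDeriv t)
      ≤ bconv a t * (1 - bconv a t) * binEntropyDeriv (bconv a t) := by
  have h := concaveOn_mul_one_sub_mul_binEntropyDeriv.2 ht ⟨by norm_num, le_rfl⟩
    (by linarith [ha.2]) (by linarith [ha.1]) (sub_add_cancel 1 (2 * a))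
  simp only [smul_eq_mul, binEntropyDeriv, show (1 : ℝ) - 1 / 2 = 1 / 2 by norm_num, sub_self,
    mul_zero, add_zero] at h
  rwa [show (1 - 2 * a) * t + 2 * a * (1 / 2) = bconv a t by rw [bconv_eq]; ring] at h

lemma monotoneOn_binEntropyDeriv_bconv_div {a : ℝ} (ha : a ∈ Icc (0 : ℝ) (1 / 2)) :
    MonotoneOn (fun t => binEntropyDeriv (bconv a t) / binEntropyDeriv t) (Ioo 0 (1 / 2)) := by
  have hderiv : ∀ t ∈ Ioo (0 : ℝ) (1 / 2), HasDerivAt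
      (fun t => binEntropyDeriv (bconv a t) / binEntropyDeriv t)
      ((-(bconv a t * (1 - bconv a t))⁻¹ * (1 - 2 * a) * binEntropyDeriv t
        - binEntropyDeriv (bconv a t) * -(t * (1 - t))⁻¹) / binEntropyDeriv t ^ 2) t := by
    rintro t ⟨ht0, ht1⟩
    obtain ⟨hu0, hu1⟩ := bconv_mem_Ioc ha ⟨ht0, ht1⟩
    exact ((hasDerivAt_binEntropyDeriv hu0 (by linarith)).comp t (hasDerivAt_bconv a t)).div
      (hasDerivAt_binEntropyDeriv ht0 (by linarith)) (binEntropyDeriv_pos ht0 ht1).ne'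
  refine monotoneOn_of_hasDerivWithinAt_nonneg (convex_Ioo 0 (1 / 2))
    (fun t ht => (hderiv t ht).continuousAt.continuousWithinAt)
    (fun t ht => (hderiv t (interior_subset ht)).hasDerivWithinAt) ?_
  rw [interior_Ioo]
  rintro t ⟨ht0, ht1⟩
  obtain ⟨hu0, hu1⟩ := bconv_mem_Ioc ha ⟨ht0, ht1⟩
  have hkey := one_sub_two_mul_mul_le_bconv ha ⟨ht0, ht1.le⟩
  set u := bconv a t
  have hnum : -(u * (1 - u))⁻¹ * (1 - 2 * a) * binEntropyDeriv t
        - binEntropyDeriv u * -(t * (1 - t))⁻¹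
      = (u * (1 - u) * binEntropyDeriv u - (1 - 2 * a) * (t * (1 - t) * binEntropyDeriv t))
        / (t * (1 - t) * (u * (1 - u))) := by
    have : 1 - t ≠ 0 := by linarith
    have : 1 - u ≠ 0 := by linarith
    field_simp
    ring
  rw [hnum]
  exact div_nonneg (div_nonneg (by linarith)
    (mul_nonneg (mul_nonneg ht0.le (by linarith)) (mul_nonneg hu0.le (by linarith)))) (sq_nonneg _)

lemma binEntropy_bconv_sub_mul_binEntropy_le {a δ t c : ℝ} (ha : a ∈ Icc (0 : ℝ) (1 / 2))
    (hδ : δ ∈ Ioo (0 : ℝ) (1 / 2)) (ht : t ∈ Icc (0 : ℝ) (1 / 2))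
    (hc : c = (1 - 2 * a) * binEntropyDeriv (bconv a δ) / binEntropyDeriv δ) :
    binEntropy (bconv a δ) - c * binEntropy δ ≤ binEntropy (bconv a t) - c * binEntropy t := by
  set r := fun t => binEntropyDeriv (bconv a t) / binEntropyDeriv t
  set G := fun t => binEntropy (bconv a t) - c * binEntropy t
  have hGcont : Continuous G := by
    have : Continuous (bconv a) :=
      continuous_iff_continuousAt.2 fun b => (hasDerivAt_bconv a b).continuousAt
    fun_prop
  have hG' : ∀ s ∈ Ioo (0 : ℝ) (1 / 2),
      HasDerivAt G ((1 - 2 * a) * binEntropyDeriv s * (r s - r δ)) s := by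
    rintro s ⟨hs0, hs1⟩
    obtain ⟨hu0, hu1⟩ := bconv_mem_Ioc ha ⟨hs0, hs1⟩
    refine (((hasDerivAt_binEntropy hu0.ne' (by linarith)).comp s (hasDerivAt_bconv a s)).sub
      ((hasDerivAt_binEntropy hs0.ne' (by linarith)).const_mul c)).congr_deriv ?_
    have := (binEntropyDeriv_pos hs0 hs1).ne'
    simp only [r, hc]
    field_simp
    simp only [binEntropyDeriv]
  have hr := monotoneOn_binEntropyDeriv_bconv_div ha
  have hsign : ∀ s ∈ Ioo (0 : ℝ) (1 / 2), 0 ≤ (1 - 2 * a) * binEntropyDeriv s :=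
    fun s hs => mul_nonneg (by linarith [ha.2]) (binEntropyDeriv_pos hs.1 hs.2).le
  rcases le_total t δ with htδ | hδt
  · refine antitoneOn_of_hasDerivWithinAt_nonpos (convex_Icc 0 δ)
      (f' := fun s => (1 - 2 * a) * binEntropyDeriv s * (r s - r δ)) hGcont.continuousOn
      (fun s hs => ?_) (fun s hs => ?_) ⟨ht.1, htδ⟩ ⟨hδ.1.le, le_rfl⟩ htδ <;>
    rw [interior_Icc] at hs <;> have hs' : s ∈ Ioo (0 : ℝ) (1 / 2) := ⟨hs.1, hs.2.trans hδ.2⟩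
    · exact (hG' s hs').hasDerivWithinAt
    · exact mul_nonpos_of_nonneg_of_nonpos (hsign s hs')
        (sub_nonpos.2 (hr hs' hδ hs.2.le))
  · refine monotoneOn_of_hasDerivWithinAt_nonneg (convex_Icc δ (1 / 2))
      (f' := fun s => (1 - 2 * a) * binEntropyDeriv s * (r s - r δ)) hGcont.continuousOn
      (fun s hs => ?_) (fun s hs => ?_) ⟨le_rfl, hδ.2.le⟩ ⟨hδt, ht.2⟩ hδt <;>
    rw [interior_Icc] at hs <;> have hs' : s ∈ Ioo (0 : ℝ) (1 / 2) := ⟨hδ.1.trans hs.1, hs.2⟩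
    · exact (hG' s hs').hasDerivWithinAt
    · exact mul_nonneg (hsign s hs') (sub_nonneg.2 (hr hδ hs' hs.1.le))

lemma exists_binEntropy_bconv_supporting_line {a δ : ℝ} (ha : a ∈ Icc (0 : ℝ) (1 / 2))
    (hδ : δ ∈ Icc (0 : ℝ) (1 / 2)) :
    ∃ c ≥ 0, ∀ t ∈ Icc (0 : ℝ) 1,
      binEntropy (bconv a δ) + c * (binEntropy t - binEntropy δ) ≤ binEntropy (bconv a t) := by
  have ha' : a ∈ Icc (0 : ℝ) 1 := ⟨ha.1, by linarith [ha.2]⟩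
  rcases hδ.1.eq_or_lt with rfl | hδ0
  · refine ⟨0, le_rfl, fun t ht => ?_⟩
    simpa [bconv] using binEntropy_le_binEntropy_bconv ha' ht
  rcases hδ.2.eq_or_lt with rfl | hδ1
  · refine ⟨1, zero_le_one, fun t ht => ?_⟩
    rw [bconv_comm a t, show bconv a (1 / 2) = 1 / 2 by unfold bconv; ring]
    linarith [binEntropy_le_binEntropy_bconv ht ha']
  refine ⟨(1 - 2 * a) * binEntropyDeriv (bconv a δ) / binEntropyDeriv δ,
    div_nonneg (mul_nonneg (by linarith [ha.2]) (binEntropyDeriv_nonneg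
      (bconv_mem_Ioc ha ⟨hδ0, hδ1⟩).1 (bconv_mem_Ioc ha ⟨hδ0, hδ1⟩).2))
      (binEntropyDeriv_pos hδ0 hδ1).le, fun t ht => ?_⟩
  rcases le_total t (1 / 2) with ht1 | ht1
  · linarith [binEntropy_bconv_sub_mul_binEntropy_le ha ⟨hδ0, hδ1⟩ ⟨ht.1, ht1⟩ rfl]
  · have := binEntropy_bconv_sub_mul_binEntropy_le ha ⟨hδ0, hδ1⟩ (t := 1 - t)
      ⟨by linarith [ht.2], by linarith⟩ rfl
    rw [bconv_one_sub, binEntropy_one_sub, binEntropy_one_sub] at this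
    linarith

theorem binEntropy_bconv_le_sum {ι : Type*} (s : Finset ι) (w p : ι → ℝ) {a δ : ℝ}
    (ha : a ∈ Icc (0 : ℝ) (1 / 2)) (hδ : δ ∈ Icc (0 : ℝ) (1 / 2))
    (hw : ∀ i ∈ s, 0 ≤ w i) (hw1 : ∑ i ∈ s, w i = 1) (hp : ∀ i ∈ s, p i ∈ Icc (0 : ℝ) 1)
    (hH : binEntropy δ ≤ ∑ i ∈ s, w i * binEntropy (p i)) :
    binEntropy (bconv a δ) ≤ ∑ i ∈ s, w i * binEntropy (bconv a (p i)) := by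
  obtain ⟨c, hc, hline⟩ := exists_binEntropy_bconv_supporting_line ha hδ
  calc binEntropy (bconv a δ)
      ≤ binEntropy (bconv a δ) + c * (∑ i ∈ s, w i * binEntropy (p i) - binEntropy δ) :=
        le_add_of_nonneg_right (mul_nonneg hc (sub_nonneg.2 hH))
    _ = ∑ i ∈ s, w i * (binEntropy (bconv a δ) + c * (binEntropy (p i) - binEntropy δ)) := by
        simp only [mul_add, mul_sub, Finset.sum_add_distrib, Finset.sum_sub_distrib,
          ← Finset.sum_mul, Finset.mul_sum, hw1]
        ring_nf
    _ ≤ ∑ i ∈ s, w i * binEntropy (bconv a (p i)) :=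
        Finset.sum_le_sum fun i hi => mul_le_mul_of_nonneg_left (hline _ (hp i hi)) (hw i hi)

lemma mul_log_two_mul (s : ℝ) : s * log (2 * s) = s * log 2 + s * log s := by
  rcases eq_or_ne s 0 with rfl | hs
  · simp
  · rw [log_mul two_ne_zero hs]; ring

lemma mul_log_add_mul_log_eq (a b : ℝ) :
    a * log (a / ((a + b) / 2)) + b * log (b / ((a + b) / 2))
      = (a + b) * (log 2 - binEntropy (a / (a + b))) := by
  rcases eq_or_ne (a + b) 0 with hab | hab
  · simp [hab]
  set s := a / (a + b) with hs
  have ha : a = (a + b) * s := by rw [hs]; field_simp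
  have hb : b = (a + b) * (1 - s) := by rw [hs]; field_simp; ring
  rw [show a / ((a + b) / 2) = 2 * s by rw [hs]; field_simp, show b / ((a + b) / 2) = 2 * (1 - s) by
    rw [hs]; field_simp; ring, binEntropy, log_inv, log_inv]
  linear_combination log (2 * s) * ha + log (2 * (1 - s)) * hb
    + (a + b) * mul_log_two_mul s + (a + b) * mul_log_two_mul (1 - s)

local notation "unifBool" => fun _ : Bool => (1 : ℝ) / 2

lemma sum_margXh {pX : X → ℝ} {q : X → Xh → ℝ} (hq : IsEncoder q) :
    ∑ xh, margXh pX q xh = ∑ x, pX x := by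
  simp only [margXh]
  rw [Finset.sum_comm]
  simp [← Finset.sum_mul, hq.2]

lemma margXh_nonneg {pX : X → ℝ} {T : Type} {q : X → T → ℝ} {xh : T} (hpX : ∀ x, 0 ≤ pX x)
    (hq : ∀ x, 0 ≤ q x xh) : 0 ≤ margXh pX q xh :=
  Finset.sum_nonneg fun x _ => mul_nonneg (hq x) (hpX x)

-- `P(X = true | X̂ = xh)` when `X` is uniform.
def posterior {T : Type} (q : Bool → T → ℝ) (xh : T) : ℝ := q true xh / (q true xh + q false xh)

lemma margXh_unifBool {T : Type} (q : Bool → T → ℝ) (xh : T) :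
    margXh unifBool q xh = (q true xh + q false xh) / 2 := by
  simp only [margXh, Fintype.sum_bool]; ring

lemma posterior_mem_Icc {T : Type} {q : Bool → T → ℝ} {xh : T} (hq : ∀ x, 0 ≤ q x xh) :
    posterior q xh ∈ Icc (0 : ℝ) 1 :=
  ⟨div_nonneg (hq true) (add_nonneg (hq true) (hq false)),
    div_le_one_of_le₀ (le_add_of_nonneg_right (hq false)) (add_nonneg (hq true) (hq false))⟩

lemma sum_margXh_unifBool_mul_log_two_sub {T : Type} [Fintype T] {q : Bool → T → ℝ}
    (hq : IsEncoder q) (f : T → ℝ) :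
    ∑ xh, margXh unifBool q xh * (log 2 - f xh) = log 2 - ∑ xh, margXh unifBool q xh * f xh := by
  simp only [mul_sub, Finset.sum_sub_distrib, ← Finset.sum_mul, sum_margXh hq]
  simp

lemma IX_unifBool {T : Type} [Fintype T] {q : Bool → T → ℝ} (hq : IsEncoder q) :
    IX unifBool q = log 2 - ∑ xh, margXh unifBool q xh * binEntropy (posterior q xh) := by
  have hterm : ∀ xh, ∑ x, (1 : ℝ) / 2 * q x xh * log (q x xh / margXh unifBool q xh)
      = margXh unifBool q xh * (log 2 - binEntropy (posterior q xh)) := by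
    intro xh
    simp only [Fintype.sum_bool, posterior, margXh_unifBool]
    linear_combination (1 / 2 : ℝ) * mul_log_add_mul_log_eq (q true xh) (q false xh)
  rw [IX, Finset.sum_comm, Finset.sum_congr rfl fun xh _ => hterm xh,
    sum_margXh_unifBool_mul_log_two_sub hq]

lemma IY_unifBool_bscChannel (α : ℝ) {T : Type} [Fintype T] {q : Bool → T → ℝ}
    (hq : IsEncoder q) :
    IY unifBool (bscChannel α) q
      = log 2 - ∑ xh, margXh unifBool q xh * binEntropy (bconv α (posterior q xh)) := by
  have hterm : ∀ xh, ∑ y, jointYXh unifBool (bscChannel α) q y xh *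
        log (jointYXh unifBool (bscChannel α) q y xh /
          (pYm unifBool (bscChannel α) y * margXh unifBool q xh))
      = margXh unifBool q xh * (log 2 - binEntropy (bconv α (posterior q xh))) := by
    intro xh
    simp only [Fintype.sum_bool, jointYXh, pYm, bscChannel, posterior, margXh_unifBool]
    simp only [if_true, Bool.false_eq_true, Bool.true_eq_false, if_false, one_div]
    generalize q true xh = u, q false xh = v
    set a := (1 - α) * u * 2⁻¹ + α * v * 2⁻¹
    set b := α * u * 2⁻¹ + (1 - α) * v * 2⁻¹
    have hab : a + b = (u + v) / 2 := by ring
    rw [show ((1 - α) * 2⁻¹ + α * 2⁻¹) * ((u + v) / 2) = (a + b) / 2 by rw [hab]; ring,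
      show (α * 2⁻¹ + (1 - α) * 2⁻¹) * ((u + v) / 2) = (a + b) / 2 by rw [hab]; ring,
      mul_log_add_mul_log_eq, hab]
    rcases eq_or_ne (u + v) 0 with huv | huv
    · simp [huv]
    · rw [show a / ((u + v) / 2) = bconv α (u / (u + v)) by unfold bconv; field_simp; ring]
  rw [IY, Finset.sum_comm, Finset.sum_congr rfl fun xh _ => hterm xh,
    sum_margXh_unifBool_mul_log_two_sub hq]

lemma isEncoder_bscEnc {δ : ℝ} (hδ0 : 0 ≤ δ) (hδ1 : δ ≤ 1) : IsEncoder (bscEnc δ) := by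
  refine ⟨fun x xh => ?_, fun x => ?_⟩
  · unfold bscEnc; split_ifs <;> linarith
  · cases x <;> simp [bscEnc]

lemma margXh_unifBool_bscEnc (δ : ℝ) (xh : Bool) : margXh unifBool (bscEnc δ) xh = 1 / 2 := by
  rw [margXh_unifBool]
  cases xh <;> simp only [bscEnc] <;> norm_num

lemma posterior_bscEnc (δ : ℝ) (xh : Bool) :
    posterior (bscEnc δ) xh = if xh then 1 - δ else δ := by
  cases xh <;> simp [posterior, bscEnc]

lemma IX_unifBool_bscEnc {δ : ℝ} (hδ0 : 0 ≤ δ) (hδ1 : δ ≤ 1) :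
    IX unifBool (bscEnc δ) = log 2 - binEntropy δ := by
  simp only [IX_unifBool (isEncoder_bscEnc hδ0 hδ1), Fintype.sum_bool, margXh_unifBool_bscEnc,
    posterior_bscEnc, if_true, Bool.false_eq_true, if_false, binEntropy_one_sub]
  ring

lemma IY_unifBool_bscChannel_bscEnc (α : ℝ) {δ : ℝ} (hδ0 : 0 ≤ δ) (hδ1 : δ ≤ 1) :
    IY unifBool (bscChannel α) (bscEnc δ) = log 2 - binEntropy (bconv α δ) := by
  simp only [IY_unifBool_bscChannel α (isEncoder_bscEnc hδ0 hδ1), Fintype.sum_bool,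
    margXh_unifBool_bscEnc, posterior_bscEnc, if_true, Bool.false_eq_true, if_false,
    bconv_one_sub, binEntropy_one_sub]
  ring

theorem bsc_curve_mrs_gerber_general (α IXc δ : ℝ)
    (hα0 : 0 < α) (hα2 : α < 1 / 2)
    (hδ0 : 0 ≤ δ) (hδ2 : δ ≤ 1 / 2)
    (hδinv : binEnt δ = Real.log 2 - IXc) :
    (∀ (Xh' : Type) [Fintype Xh'], ∀ q : Bool → Xh' → ℝ, IsEncoder q →
      IX (fun _ : Bool => (1 : ℝ) / 2) q ≤ IXc →
      IY (fun _ : Bool => (1 : ℝ) / 2) (bscChannel α) q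
        ≤ Real.log 2 - binEnt (bconv α δ)) ∧
    IsEncoder (bscEnc δ) ∧
    IX (fun _ : Bool => (1 : ℝ) / 2) (bscEnc δ) ≤ IXc ∧
    IY (fun _ : Bool => (1 : ℝ) / 2) (bscChannel α) (bscEnc δ)
      = Real.log 2 - binEnt (bconv α δ) := by
  rw [binEnt_eq_binEntropy] at hδinv ⊢
  have hδ1 : δ ≤ 1 := by linarith
  refine ⟨fun T _ q hq hIX => ?_, isEncoder_bscEnc hδ0 hδ1,
    by rw [IX_unifBool_bscEnc hδ0 hδ1]; linarith, IY_unifBool_bscChannel_bscEnc α hδ0 hδ1⟩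
  rw [IX_unifBool hq] at hIX
  have hmgl := binEntropy_bconv_le_sum Finset.univ (margXh unifBool q) (posterior q)
    ⟨hα0.le, hα2.le⟩ ⟨hδ0, hδ2⟩
    (fun xh _ => margXh_nonneg (fun _ => by norm_num) (fun x => hq.1 x xh))
    (by simp [sum_margXh hq]) (fun xh _ => posterior_mem_Icc fun x => hq.1 x xh) (by linarith)
  rw [IY_unifBool_bscChannel α hq]
  linarith

/-- Mrs. Gerber's-Lemma-based optimality for the BSC.  With
`δ = h⁻¹(log 2 - I_X)`, every Markov chain `X̂ — X — Y` with `I(X̂;X) ≤ I_X` has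
`I(X̂;Y) ≤ log 2 - h(α*δ)`, and equality is attained by `X̂ = X ⊕ V`, `V ~ Bern(δ)`;
that is, the IB curve satisfies `I_Y(I_X) = log 2 - h(α * h⁻¹(log 2 - I_X))`. -/
theorem bsc_curve_mrs_gerber (α IXc δ : ℝ)
    (hα0 : 0 < α) (hα2 : α < 1 / 2)
    (hI0 : 0 ≤ IXc) (hI1 : IXc ≤ Real.log 2)
    (hδ0 : 0 ≤ δ) (hδ2 : δ ≤ 1 / 2)
    (hδinv : binEnt δ = Real.log 2 - IXc) :
    (∀ (Xh' : Type) [Fintype Xh'], ∀ q : Bool → Xh' → ℝ, IsEncoder q →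
      IX (fun _ : Bool => (1 : ℝ) / 2) q ≤ IXc →
      IY (fun _ : Bool => (1 : ℝ) / 2) (bscChannel α) q
        ≤ Real.log 2 - binEnt (bconv α δ)) ∧
    IsEncoder (bscEnc δ) ∧
    IX (fun _ : Bool => (1 : ℝ) / 2) (bscEnc δ) ≤ IXc ∧
    IY (fun _ : Bool => (1 : ℝ) / 2) (bscChannel α) (bscEnc δ)
      = Real.log 2 - binEnt (bconv α δ) :=
  bsc_curve_mrs_gerber_general α IXc δ hα0 hα2 hδ0 hδ2 hδinv

end IB
end
end

section
/- If a finite IB problem's joint distribution matrix decomposes into blocks, then the IB curve has a linear segment of slope 1 at the origin: specifically, when p(x,y) is block-diagonal (up to permutation of rows and columns) with k ≥ 2 blocks, the deterministic encoder assigning each x to the index of its block achieves I(X;X̂) = I(Y;X̂) = H(X̂) > 0, so every point (t·H(X̂), t·H(X̂)) for t ∈ [0,1] lies on the IB curve, and on [0, H(X̂)] the IB curve satisfies I_Y(I_X) = I_X. -/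
open scoped BigOperators
open Real

noncomputable section

namespace IB

variable {X Y Xh : Type} [Fintype X] [Fintype Y] [Fintype Xh]

/-- The IB curve, allowing representation alphabets `Fin T` of arbitrary finite size. -/
def curveN (pX : X → ℝ) (pYgX : X → Y → ℝ) (c : ℝ) : ℝ :=
  sSup {v : ℝ | ∃ (T : ℕ) (q : X → Fin T → ℝ), IsEncoder q ∧ IX pX q ≤ c ∧ IY pX pYgX q = v}

/-- The deterministic block encoder assigning each `x` to the index of its block. -/
def blockEnc {k : ℕ} (blockX : X → Fin k) : X → Fin k → ℝ :=
  fun x i => if blockX x = i then 1 else 0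

/-- Entropy `H(X̂)` of the cluster marginal. -/
def entXh (pX : X → ℝ) (q : X → Xh → ℝ) : ℝ :=
  -∑ xh, margXh pX q xh * Real.log (margXh pX q xh)


/-!
The block encoder makes `X̂` a function of `X` and, since `p(x, y)` vanishes off the blocks,
almost surely also a function of `Y`; hence `I(X;X̂) = I(Y;X̂) = H(X̂)`, and `H(X̂) > 0` because
at least two blocks carry positive mass. The data-processing inequality `I(Y;X̂) ≤ I(X;X̂)` puts
the whole IB curve below the diagonal. Conversely every point of the diagonal up to `H(X̂)` is
attained by time sharing: with probability `t` report the block, otherwise a fresh symbol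
independent of `X`. This scales both informations by `t`.
-/

lemma sub_le_mul_log_div {a b : ℝ} (ha : 0 ≤ a) (hb : 0 < b) : a - b ≤ a * log (a / b) := by
  have := mul_le_mul_of_nonneg_left (self_sub_one_le_mul_log (div_nonneg ha hb.le)) hb.le
  rwa [mul_sub, mul_div_cancel₀ _ hb.ne', mul_one, ← mul_assoc, mul_div_cancel₀ _ hb.ne'] at this

lemma sum_fiberwise_mul {ι κ : Type*} [Fintype ι] [Fintype κ] [DecidableEq κ] (g : ι → κ)
    (w : ι → ℝ) (F : κ → ℝ) : ∑ j, (∑ i with g i = j, w i) * F j = ∑ i, w i * F (g i) := by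
  rw [← Finset.sum_fiberwise Finset.univ g fun i => w i * F (g i)]
  refine Fintype.sum_congr _ _ fun j => ?_
  rw [Finset.sum_mul]
  exact Finset.sum_congr rfl fun i hi => by rw [(Finset.mem_filter.1 hi).2]

lemma neg_sum_mul_log_pos {ι : Type*} [Fintype ι] [Nontrivial ι] {w : ι → ℝ}
    (hw : ∀ i, 0 < w i) (hsum : ∑ i, w i = 1) : 0 < -∑ i, w i * log (w i) := by
  have hlt : ∀ i, w i < 1 := fun i => by
    obtain ⟨j, hj⟩ := exists_ne i
    exact hsum ▸ Finset.single_lt_sum hj (Finset.mem_univ i) (Finset.mem_univ j) (hw j)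
      fun k _ _ => (hw k).le
  exact neg_pos.2 <| Finset.sum_neg (fun i _ => mul_log_neg (hw i) (hlt i)) Finset.univ_nonempty

section DataProcessing

variable {pX : X → ℝ} {pYgX : X → Y → ℝ} {q : X → Xh → ℝ}

lemma IX_eq_sum (hrow : ∀ x, ∑ y, pYgX x y = 1) :
    IX pX q = ∑ x, ∑ y, ∑ xh, pYgX x y * q x xh * pX x * log (q x xh / margXh pX q xh) := by
  unfold IX
  refine Fintype.sum_congr _ _ fun x => ?_
  rw [Finset.sum_comm]
  refine Fintype.sum_congr _ _ fun xh => ?_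
  rw [← Finset.sum_mul, ← Finset.sum_mul, ← Finset.sum_mul, hrow, one_mul, mul_comm (q x xh)]

lemma IY_eq_sum :
    IY pX pYgX q = ∑ x, ∑ y, ∑ xh, pYgX x y * q x xh * pX x *
      log (jointYXh pX pYgX q y xh / (pYm pX pYgX y * margXh pX q xh)) := by
  rw [Finset.sum_comm]
  refine Fintype.sum_congr _ _ fun y => ?_
  rw [Finset.sum_comm]
  simp only [jointYXh, Finset.sum_mul]

lemma sum_mul_jointYXh_div_pYm_le (hpX : ∀ x, 0 ≤ pX x) (hp : ∀ x y, 0 ≤ pYgX x y)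
    (hq : ∀ x xh, 0 ≤ q x xh) :
    ∑ x, ∑ y, ∑ xh, pYgX x y * pX x * jointYXh pX pYgX q y xh / pYm pX pYgX y ≤
      ∑ x, ∑ y, ∑ xh, pYgX x y * q x xh * pX x := by
  calc ∑ x, ∑ y, ∑ xh, pYgX x y * pX x * jointYXh pX pYgX q y xh / pYm pX pYgX y
      = ∑ y, ∑ xh, jointYXh pX pYgX q y xh * (pYm pX pYgX y / pYm pX pYgX y) := by
        rw [Finset.sum_comm]
        refine Fintype.sum_congr _ _ fun y => ?_
        rw [Finset.sum_comm]
        refine Fintype.sum_congr _ _ fun xh => ?_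
        simp only [pYm, ← Finset.sum_div, ← Finset.sum_mul]
        ring
    _ ≤ ∑ y, ∑ xh, jointYXh pX pYgX q y xh :=
        Finset.sum_le_sum fun y _ => Finset.sum_le_sum fun xh _ => mul_le_of_le_one_right
          (Finset.sum_nonneg fun x _ => mul_nonneg (mul_nonneg (hp x y) (hq x xh)) (hpX x))
          (div_self_le_one _)
    _ = ∑ x, ∑ y, ∑ xh, pYgX x y * q x xh * pX x :=
        (Finset.sum_comm.trans (Fintype.sum_congr _ _ fun y => Finset.sum_comm)).symm

theorem IY_le_IX (hpX : ∀ x, 0 ≤ pX x) (hp : ∀ x y, 0 ≤ pYgX x y)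
    (hrow : ∀ x, ∑ y, pYgX x y = 1) (hq : IsEncoder q) : IY pX pYgX q ≤ IX pX q := by
  set m := margXh pX q
  set J := jointYXh pX pYgX q
  set pY := pYm pX pYgX
  -- `I(X;X̂) - I(Y;X̂) = ∑ a log (a / b)` with `a = p(x,y,x̂)` and `b = p(x,y) p(x̂|y)`
  have hterm : ∀ x y xh, pYgX x y * q x xh * pX x - pYgX x y * pX x * J y xh / pY y ≤
      pYgX x y * q x xh * pX x * log (q x xh / m xh) -
        pYgX x y * q x xh * pX x * log (J y xh / (pY y * m xh)) := by
    intro x y xh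
    have hq' := hq.1 x xh
    rcases (mul_nonneg (mul_nonneg (hp x y) hq') (hpX x)).eq_or_lt with ha | ha
    · have hJ : 0 ≤ J y xh :=
        Finset.sum_nonneg fun x _ => mul_nonneg (mul_nonneg (hp x y) (hq.1 x xh)) (hpX x)
      have hpY : 0 ≤ pY y := Finset.sum_nonneg fun x _ => mul_nonneg (hp x y) (hpX x)
      rw [← ha]
      simpa using div_nonneg (mul_nonneg (mul_nonneg (hp x y) (hpX x)) hJ) hpY
    have hpx := pos_of_mul_pos_right ha (mul_nonneg (hp x y) hq')
    have hpqx := pos_of_mul_pos_left ha (hpX x)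
    have hpxy := pos_of_mul_pos_left hpqx hq'
    have hqx := pos_of_mul_pos_right hpqx (hp x y)
    have hm : 0 < m xh := (mul_pos hqx hpx).trans_le <| Finset.single_le_sum
      (f := fun x => q x xh * pX x) (fun x _ => mul_nonneg (hq.1 x xh) (hpX x)) (Finset.mem_univ x)
    have hJ : 0 < J y xh := ha.trans_le <| Finset.single_le_sum
      (f := fun x => pYgX x y * q x xh * pX x)
      (fun x _ => mul_nonneg (mul_nonneg (hp x y) (hq.1 x xh)) (hpX x)) (Finset.mem_univ x)
    have hpY : 0 < pY y := (mul_pos hpxy hpx).trans_le <| Finset.single_le_sum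
      (f := fun x => pYgX x y * pX x) (fun x _ => mul_nonneg (hp x y) (hpX x)) (Finset.mem_univ x)
    have hlog : log (q x xh / m xh) - log (J y xh / (pY y * m xh)) =
        log (pYgX x y * q x xh * pX x / (pYgX x y * pX x * J y xh / pY y)) := by
      rw [← log_div (by positivity) (by positivity)]
      congr 1
      field_simp
    have := sub_le_mul_log_div ha.le (show 0 < pYgX x y * pX x * J y xh / pY y by positivity)
    rw [← hlog] at this
    linarith
  have hterms := Finset.sum_le_sum fun x (_ : x ∈ Finset.univ) => Finset.sum_le_sum
    fun y (_ : y ∈ Finset.univ) => Finset.sum_le_sum fun xh (_ : xh ∈ Finset.univ) => hterm x y xh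
  simp only [Finset.sum_sub_distrib] at hterms
  rw [IY_eq_sum, IX_eq_sum hrow]
  linarith [sum_mul_jointYXh_div_pYm_le hpX hp hq.1]

end DataProcessing

def erasureMix {T : ℕ} (t : ℝ) (q : X → Fin T → ℝ) : X → Fin (T + 1) → ℝ :=
  fun x => Fin.snoc (α := fun _ => ℝ) (fun i => t * q x i) (1 - t)

lemma isEncoder_erasureMix {α : Type} {T : ℕ} {t : ℝ} (ht₀ : 0 ≤ t) (ht₁ : t ≤ 1)
    {q : α → Fin T → ℝ} (hq : IsEncoder q) : IsEncoder (erasureMix t q) := by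
  refine ⟨fun x j => ?_, fun x => ?_⟩
  · induction j using Fin.lastCases with
    | last => simpa [erasureMix] using ht₁
    | cast i => simpa [erasureMix] using mul_nonneg ht₀ (hq.1 x i)
  · simp [erasureMix, Fin.sum_univ_castSucc, ← Finset.mul_sum, hq.2 x]

section ErasureMix

variable {T : ℕ} (t : ℝ) (q : X → Fin T → ℝ) (pX : X → ℝ)

@[simp] lemma margXh_erasureMix_castSucc (i : Fin T) :
    margXh pX (erasureMix t q) i.castSucc = t * margXh pX q i := by
  simp [margXh, erasureMix, Finset.mul_sum, mul_assoc]

@[simp] lemma margXh_erasureMix_last :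
    margXh pX (erasureMix t q) (Fin.last T) = (1 - t) * ∑ x, pX x := by
  simp [margXh, erasureMix, Finset.mul_sum]

lemma IX_erasureMix (hpX : ∑ x, pX x = 1) : IX pX (erasureMix t q) = t * IX pX q := by
  rcases eq_or_ne t 0 with rfl | ht
  · simp [IX, erasureMix, Fin.sum_univ_castSucc, hpX]
  · simp only [IX, Fin.sum_univ_castSucc, margXh_erasureMix_castSucc, margXh_erasureMix_last,
      erasureMix, Fin.snoc_castSucc, Fin.snoc_last, hpX, mul_one, log_div_self, mul_zero,
      add_zero, mul_div_mul_left _ _ ht, Finset.mul_sum]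
    exact Fintype.sum_congr _ _ fun x => Fintype.sum_congr _ _ fun i => by ring

lemma IY_erasureMix (pYgX : X → Y → ℝ) (hpX : ∑ x, pX x = 1) :
    IY pX pYgX (erasureMix t q) = t * IY pX pYgX q := by
  have hJ : ∀ y i, jointYXh pX pYgX (erasureMix t q) y i.castSucc = t * jointYXh pX pYgX q y i :=
    fun y i => by
      simp only [jointYXh, erasureMix, Fin.snoc_castSucc, Finset.mul_sum]
      exact Fintype.sum_congr _ _ fun x => by ring
  have hJlast : ∀ y, jointYXh pX pYgX (erasureMix t q) y (Fin.last T) =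
      (1 - t) * pYm pX pYgX y := fun y => by
    simp only [jointYXh, pYm, erasureMix, Fin.snoc_last, Finset.mul_sum]
    exact Fintype.sum_congr _ _ fun x => by ring
  rcases eq_or_ne t 0 with rfl | ht
  · simp [IY, Fin.sum_univ_castSucc, hpX, hJ, hJlast]
  · simp only [IY, Fin.sum_univ_castSucc, margXh_erasureMix_castSucc, margXh_erasureMix_last,
      hJ, hJlast, hpX, mul_one, mul_left_comm _ t, mul_comm (pYm pX pYgX _) (1 - t),
      mul_div_mul_left _ _ ht, log_div_self, mul_zero, add_zero, Finset.mul_sum]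
    exact Fintype.sum_congr _ _ fun y => Fintype.sum_congr _ _ fun i => by ring

end ErasureMix

theorem curveN_eq_self {pX : X → ℝ} {pYgX : X → Y → ℝ} (hpX : ∀ x, 0 ≤ pX x)
    (hp : ∀ x y, 0 ≤ pYgX x y) (hrow : ∀ x, ∑ y, pYgX x y = 1) (hsum : ∑ x, pX x = 1)
    {T : ℕ} {q : X → Fin T → ℝ} (hq : IsEncoder q) (hIXY : IY pX pYgX q = IX pX q)
    {c : ℝ} (hc : c ∈ Set.Icc 0 (IX pX q)) : curveN pX pYgX c = c := by
  obtain ⟨hc₀, hc₁⟩ := hc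
  refine IsGreatest.csSup_eq ⟨?_, ?_⟩
  · have ht : c / IX pX q * IX pX q = c := by
      rcases eq_or_ne (IX pX q) 0 with h | h
      · simp only [h, mul_zero]
        linarith
      · exact div_mul_cancel₀ c h
    refine ⟨T + 1, erasureMix (c / IX pX q) q, isEncoder_erasureMix
      (div_nonneg hc₀ (hc₀.trans hc₁)) (div_le_one_of_le₀ hc₁ (hc₀.trans hc₁)) hq, ?_, ?_⟩
    · rw [IX_erasureMix _ _ _ hsum, ht]
    · rw [IY_erasureMix _ _ _ _ hsum, hIXY, ht]
  · rintro v ⟨T', q', hq', hIX, rfl⟩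
    exact (IY_le_IX hpX hp hrow hq').trans hIX

lemma isEncoder_blockEnc {α : Type} {k : ℕ} (blockX : α → Fin k) : IsEncoder (blockEnc blockX) :=
  ⟨fun x i => by unfold blockEnc; split_ifs <;> norm_num, fun x => by simp [blockEnc]⟩

section BlockEncoder

variable {k : ℕ} (pX : X → ℝ) (blockX : X → Fin k)

lemma margXh_blockEnc (i : Fin k) :
    margXh pX (blockEnc blockX) i = ∑ x with blockX x = i, pX x := by
  simp [margXh, blockEnc, Finset.sum_filter]

lemma IX_blockEnc : IX pX (blockEnc blockX) = entXh pX (blockEnc blockX) := by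
  rw [entXh, Finset.sum_congr rfl fun i _ => by rw [margXh_blockEnc], sum_fiberwise_mul,
    ← Finset.sum_neg_distrib, IX]
  refine Fintype.sum_congr _ _ fun x => ?_
  rw [Finset.sum_eq_single (blockX x) (fun i _ hi => by simp [blockEnc, Ne.symm hi]) (by simp),
    ← margXh_blockEnc]
  simp [blockEnc, log_inv]

lemma entXh_blockEnc_pos (hpX : ∀ x, 0 < pX x) (hsum : ∑ x, pX x = 1) [Nontrivial (Fin k)]
    (hsurj : Function.Surjective blockX) : 0 < entXh pX (blockEnc blockX) := by
  refine neg_sum_mul_log_pos (fun i => ?_) ?_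
  · obtain ⟨x, rfl⟩ := hsurj i
    rw [margXh_blockEnc]
    exact Finset.sum_pos (fun x _ => hpX x) ⟨x, by simp⟩
  · simp_rw [margXh_blockEnc, Finset.sum_fiberwise, hsum]

lemma IY_blockEnc {pYgX : X → Y → ℝ} {blockY : Y → Fin k}
    (hblock : ∀ x y, blockX x ≠ blockY y → pYgX x y * pX x = 0)
    (hrow : ∀ x, ∑ y, pYgX x y = 1) :
    IY pX pYgX (blockEnc blockX) = entXh pX (blockEnc blockX) := by
  have hJ : ∀ y i, jointYXh pX pYgX (blockEnc blockX) y i =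
      if blockY y = i then pYm pX pYgX y else 0 := by
    intro y i
    unfold jointYXh pYm blockEnc
    split_ifs with hy
    · refine Fintype.sum_congr _ _ fun x => ?_
      split_ifs with hx
      · ring
      · simpa using (hblock x y (hy ▸ hx)).symm
    · refine Finset.sum_eq_zero fun x _ => ?_
      split_ifs with hx
      · simpa [mul_comm] using hblock x y (hx ▸ Ne.symm hy)
      · simp
  have hm : ∀ i, margXh pX (blockEnc blockX) i = ∑ y with blockY y = i, pYm pX pYgX y := by
    intro i
    rw [Finset.sum_filter, ← Fintype.sum_congr _ _ fun y => hJ y i, margXh]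
    unfold jointYXh
    rw [Finset.sum_comm]
    refine Fintype.sum_congr _ _ fun x => ?_
    rw [← Finset.sum_mul, ← Finset.sum_mul, hrow, one_mul]
  rw [entXh, Finset.sum_congr rfl fun i _ => by rw [hm], sum_fiberwise_mul,
    ← Finset.sum_neg_distrib, IY]
  refine Fintype.sum_congr _ _ fun y => ?_
  rw [Finset.sum_eq_single (blockY y) (fun i _ hi => by simp [hJ, Ne.symm hi]) (by simp),
    ← hm, hJ, if_pos rfl]
  rcases eq_or_ne (pYm pX pYgX y) 0 with h | h
  · simp [h]
  · rw [div_mul_cancel_left₀ h, log_inv, mul_neg]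

end BlockEncoder

/-- if the joint distribution decomposes into `k ≥ 2` blocks, the block
encoder achieves `I(X;X̂) = I(Y;X̂) = H(X̂) > 0`, and on `[0, H(X̂)]` the IB curve is
the straight line `I_Y(I_X) = I_X` (a linear segment of slope 1 at the origin). -/
theorem decomposable_gives_linear_segment
    (pJ : X → Y → ℝ) (hnn : ∀ x y, 0 ≤ pJ x y) (hsum : ∑ x, ∑ y, pJ x y = 1)
    (hpX : ∀ x, 0 < ∑ y, pJ x y)
    (k : ℕ) (hk : 2 ≤ k)
    (blockX : X → Fin k) (blockY : Y → Fin k)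
    (hsurj : ∀ i, ∃ x, blockX x = i)
    (hblock : ∀ x y, blockX x ≠ blockY y → pJ x y = 0) :
    IX (fun x => ∑ y, pJ x y) (blockEnc blockX)
      = entXh (fun x => ∑ y, pJ x y) (blockEnc blockX) ∧
    IY (fun x => ∑ y, pJ x y) (fun x y => pJ x y / ∑ y', pJ x y') (blockEnc blockX)
      = entXh (fun x => ∑ y, pJ x y) (blockEnc blockX) ∧
    0 < entXh (fun x => ∑ y, pJ x y) (blockEnc blockX) ∧
    ∀ c ∈ Set.Icc (0 : ℝ) (entXh (fun x => ∑ y, pJ x y) (blockEnc blockX)),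
      curveN (fun x => ∑ y, pJ x y) (fun x y => pJ x y / ∑ y', pJ x y') c = c := by
  have hrow : ∀ x, ∑ y, pJ x y / ∑ y', pJ x y' = 1 := fun x => by
    rw [← Finset.sum_div, div_self (hpX x).ne']
  have hblock' : ∀ x y, blockX x ≠ blockY y → pJ x y / (∑ y', pJ x y') * ∑ y', pJ x y' = 0 :=
    fun x y h => by rw [div_mul_cancel₀ _ (hpX x).ne', hblock x y h]
  have hIX := IX_blockEnc (fun x => ∑ y, pJ x y) blockX
  have hIY := IY_blockEnc _ blockX hblock' hrow
  have : Nontrivial (Fin k) := Fin.nontrivial_iff_two_le.2 hk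
  refine ⟨hIX, hIY, entXh_blockEnc_pos _ blockX hpX hsum hsurj, fun c hc => ?_⟩
  exact curveN_eq_self (fun x => (hpX x).le) (fun x y => div_nonneg (hnn x y) (hpX x).le) hrow
    hsum (isEncoder_blockEnc blockX) (hIY.trans hIX.symm) (hIX ▸ hc)

end IB
end
end
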